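/- For every natural number n and every x, the identity K_{3n}(x) = ∑_{i=0}^{n} ∑_{j=0}^{i} C(n,i) · C(i,j) · x^{i+j} · K_{i+j}(x) holds, where C(a,b) denotes the binomial coefficient. -/
import Mathlib
open Matrix Finset

/-- Tribonacci-Lucas polynomials over a commutative ring. -/
def tribLucasPoly {R : Type*} [CommRing R] (x : R) : ℕ → R
  | 0 => 3
  | 1 => x ^ 2
  | 2 => x ^ 4 + 2 * x
  | n + 3 => x ^ 2 * tribLucasPoly x (n + 2) + x * tribLucasPoly x (n + 1) + tribLucasPoly x n

private def Mx {R : Type*} [CommRing R] (x : R) : Matrix (Fin 3) (Fin 3) R :=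
  !![x^2, x, 1; 1, 0, 0; 0, 1, 0]

private lemma Mx_cubic {R : Type*} [CommRing R] (x : R) :
    Mx x ^ 3 = x^2 • Mx x ^ 2 + x • Mx x + 1 := by
  ext i j
  simp only [Mx, pow_succ, pow_zero, one_mul, Matrix.mul_fin_three]
  fin_cases i <;> fin_cases j <;>
    simp [Matrix.add_apply, Matrix.smul_apply, Matrix.one_apply] <;> ring

private lemma trace_Mx_pow {R : Type*} [CommRing R] (x : R) :
    ∀ n, (Mx x ^ n).trace = tribLucasPoly x n
  | 0 => by simp [tribLucasPoly]
  | 1 => by simp [Mx, tribLucasPoly, Matrix.trace_fin_three, Matrix.vecHead, Matrix.vecTail]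
  | 2 => by
      simp [Mx, tribLucasPoly, sq, Matrix.mul_fin_three, Matrix.trace_fin_three]
      ring
  | n + 3 => by
      have h : Mx x ^ (n + 3) = x^2 • Mx x ^ (n+2) + x • Mx x ^ (n+1) + Mx x ^ n := by
        have : Mx x ^ (n + 3) = Mx x ^ n * Mx x ^ 3 := by rw [← pow_add]
        rw [this, Mx_cubic]
        simp only [mul_add, mul_one, Matrix.mul_smul, ← pow_add, ← pow_succ]
      rw [h]
      simp only [Matrix.trace_add, Matrix.trace_smul, trace_Mx_pow x n,
        trace_Mx_pow x (n+1), trace_Mx_pow x (n+2), tribLucasPoly, smul_eq_mul]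

theorem tribLucasPoly_binomial_sum {R : Type*} [CommRing R] (x : R) (n : ℕ) :
    tribLucasPoly x (3 * n) =
      ∑ i ∈ Finset.range (n + 1), ∑ j ∈ Finset.range (i + 1),
        (n.choose i : R) * (i.choose j : R) * x ^ (i + j) * tribLucasPoly x (i + j) := by
  set A : Matrix (Fin 3) (Fin 3) R := x • Mx x with hA
  have hAc : Commute A (1 + A) := (Commute.one_right A).add_right (Commute.refl A)
  have key : Mx x ^ (3 * n) =
      ∑ i ∈ Finset.range (n + 1), ∑ j ∈ Finset.range (i + 1),
        ((n.choose i : R) * (i.choose j : R) * x ^ (i + j)) • Mx x ^ (i + j) := by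
    have h3 : Mx x ^ 3 = A * (1 + A) + 1 := by
      rw [Mx_cubic, hA, mul_add, mul_one, smul_mul_smul_comm, ← sq x, ← sq (Mx x)]
      abel
    rw [pow_mul, h3, (Commute.one_right (A * (1 + A))).add_pow]
    refine Finset.sum_congr rfl fun i hi => ?_
    have hc : ∀ (c : ℕ) (X : Matrix (Fin 3) (Fin 3) R),
        X * (c : Matrix (Fin 3) (Fin 3) R) = (c : R) • X := by
      intro c X
      rw [← (Nat.cast_commute c X).eq, ← nsmul_eq_mul, ← Nat.cast_smul_eq_nsmul R]
    rw [hAc.mul_pow, add_comm (1:Matrix (Fin 3) (Fin 3) R) A,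
      (Commute.one_right A).add_pow, Finset.mul_sum, Finset.sum_mul, Finset.sum_mul]
    refine Finset.sum_congr rfl fun j hj => ?_
    have hpow : A ^ (i + j) = x ^ (i + j) • Mx x ^ (i + j) := by
      rw [hA, smul_pow]
    simp only [one_pow, mul_one]
    rw [← mul_assoc, ← pow_add, hpow, hc, hc, smul_smul, smul_smul, mul_assoc]
  have := congrArg Matrix.trace key
  rw [trace_Mx_pow] at this
  rw [this]
  simp only [Matrix.trace_sum, Matrix.trace_smul, smul_eq_mul, trace_Mx_pow]
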